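/- Let X be an arithmetic L-space, let y ∈ max Y be a maximal localic point, and let F be a Scott upset of X. If ↑y ∩ F ≠ ∅, then y ∈ F. -/
import Mathlib


open Set Topology

variable {X : Type*} [TopologicalSpace X] [PartialOrder X]

/-- The downward closure `↓A` of a subset of a poset. -/
def dwC (A : Set X) : Set X := {x : X | ∃ a ∈ A, x ≤ a}

/-- The upward closure `↑A` of a subset of a poset. -/
def upC (A : Set X) : Set X := {x : X | ∃ a ∈ A, a ≤ x}

/-- The set of maximal points of a subset of a poset. -/
def maxOf (A : Set X) : Set X := {x ∈ A | ∀ z ∈ A, x ≤ z → z = x}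

/-- The set of minimal points of a subset of a poset. -/
def minOf (A : Set X) : Set X := {x ∈ A | ∀ z ∈ A, z ≤ x → z = x}

/-- A Priestley space: compact with the Priestley separation axiom. -/
def IsPriestley (X : Type*) [TopologicalSpace X] [PartialOrder X] : Prop :=
  CompactSpace X ∧
    ∀ x y : X, ¬x ≤ y → ∃ U : Set X, IsClopen U ∧ IsUpperSet U ∧ x ∈ U ∧ y ∉ U

/-- An L-space: a Priestley space where the closure of every open upset is an open upset. -/
def IsLSpace (X : Type*) [TopologicalSpace X] [PartialOrder X] : Prop :=
  IsPriestley X ∧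
    ∀ U : Set X, IsOpen U → IsUpperSet U → IsOpen (closure U) ∧ IsUpperSet (closure U)

/-- The set `Y` of localic points: those `y` with `↓y` clopen. -/
def localicPts (X : Type*) [TopologicalSpace X] [PartialOrder X] : Set X :=
  {y : X | IsClopen (dwC ({y} : Set X))}

/-- A Scott upset: a closed upset whose minimal points are localic. -/
def IsScottUp (F : Set X) : Prop :=
  IsClosed F ∧ IsUpperSet F ∧ minOf F ⊆ localicPts X

/-- The collection of clopen Scott upsets of `X`. -/
def ClopSUp (X : Type*) [TopologicalSpace X] [PartialOrder X] : Set (Set X) :=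
  {U : Set X | IsClopen U ∧ IsScottUp U}

/-- The core of a clopen upset: the union of the clopen Scott upsets inside it. -/
def coreC (U : Set X) : Set X := ⋃₀ {V : Set X | V ∈ ClopSUp X ∧ V ⊆ U}

/-- An algebraic L-space: the core of each clopen upset is dense in it. -/
def IsAlgebraicLSpace (X : Type*) [TopologicalSpace X] [PartialOrder X] : Prop :=
  IsLSpace X ∧ ∀ U : Set X, IsClopen U → IsUpperSet U → U ⊆ closure (coreC U)

/-- An arithmetic L-space: an algebraic L-space in which the intersection of any
two clopen Scott upsets is again a Scott upset. -/
def IsArithmeticLSpace (X : Type*) [TopologicalSpace X] [PartialOrder X] : Prop :=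
  IsAlgebraicLSpace X ∧
    ∀ U V : Set X, U ∈ ClopSUp X → V ∈ ClopSUp X → IsScottUp (U ∩ V)

/-- A nuclear subset of an L-space. -/
def IsNuclearSub (N : Set X) : Prop :=
  IsClosed N ∧ ∀ U : Set X, IsClopen U → IsClopen (dwC (U ∩ N))

/-- The nucleus `j_N` associated to a nuclear subset: `j_N U = X \ ↓(N \ U)`. -/
def jN (N U : Set X) : Set X := (dwC (N \ U))ᶜ

/-- A nuclear subset is inductive if `↑(F ∩ N)` is a Scott upset for every Scott upset `F`. -/
def IsInductiveNuclear (N : Set X) : Prop :=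
  ∀ F : Set X, IsScottUp F → IsScottUp (upC (F ∩ N))

/-- The pseudocomplement `V* = X \ ↓V`. -/
def starC (V : Set X) : Set X := (dwC V)ᶜ

/-- The `d`-nucleus on clopen upsets: `d U = cl ⋃ {V** : V ∈ ClopSUp X, V ⊆ U}`. -/
def dOp (U : Set X) : Set X :=
  closure (⋃₀ {W : Set X | ∃ V ∈ ClopSUp X, V ⊆ U ∧ W = starC (starC V)})

/-- The `d`-core: `core_d U = ⋃ {d V : V ∈ ClopSUp X, V ⊆ U}`. -/
def coreD (U : Set X) : Set X :=
  ⋃₀ {W : Set X | ∃ V ∈ ClopSUp X, V ⊆ U ∧ W = dOp V}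

/-- The topology on a subset `S ⊆ X` whose opens are (generated by) the traces of
clopen upsets of `X`. -/
def traceTop (S : Set X) : TopologicalSpace S :=
  TopologicalSpace.generateFrom
    {V : Set S | ∃ U : Set X, IsClopen U ∧ IsUpperSet U ∧ V = Subtype.val ⁻¹' U}

section Aux

lemma mem_dwC_singleton {x t : X} : t ∈ dwC ({x} : Set X) ↔ t ≤ x := by
  simp [dwC]

lemma mem_upC_singleton {x t : X} : t ∈ upC ({x} : Set X) ↔ x ≤ t := by
  simp [upC]

lemma isLowerSet_dwC (A : Set X) : IsLowerSet (dwC A) :=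
  fun _ b hba ⟨c, hc, hac⟩ => ⟨c, hc, hba.trans hac⟩

lemma isClosed_dwC_singleton (hP : IsPriestley X) (x : X) :
    IsClosed (dwC ({x} : Set X)) := by
  rw [← isOpen_compl_iff, isOpen_iff_mem_nhds]
  intro t ht
  have hnt : ¬ t ≤ x := fun h => ht (mem_dwC_singleton.mpr h)
  obtain ⟨U, hUc, hUu, htU, hxU⟩ := hP.2 t x hnt
  refine Filter.mem_of_superset (hUc.2.mem_nhds htU) ?_
  intro s hs hmem
  exact hxU (hUu (mem_dwC_singleton.mp hmem) hs)

lemma isClosed_upC_singleton (hP : IsPriestley X) (y : X) :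
    IsClosed (upC ({y} : Set X)) := by
  rw [← isOpen_compl_iff, isOpen_iff_mem_nhds]
  intro t ht
  have hnt : ¬ y ≤ t := fun h => ht (mem_upC_singleton.mpr h)
  obtain ⟨U, hUc, hUu, hyU, htU⟩ := hP.2 y t hnt
  refine Filter.mem_of_superset (hUc.1.isOpen_compl.mem_nhds htU) ?_
  intro s hs hmem
  exact hs (hUu (mem_upC_singleton.mp hmem) hyU)

/-- In a Priestley space, every closed set has a minimal element below any of its points. -/
lemma exists_min_le (hP : IsPriestley X) {C : Set X} (hC : IsClosed C) {z : X}
    (hz : z ∈ C) : ∃ m, m ≤ z ∧ m ∈ minOf C := by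
  have hcs : CompactSpace X := hP.1
  set s : Set Xᵒᵈ := {w : Xᵒᵈ | OrderDual.ofDual w ∈ C ∧ OrderDual.ofDual w ≤ z} with hs
  have hzorn := zorn_le_nonempty₀ (α := Xᵒᵈ) s ?_ (OrderDual.toDual z) ⟨hz, le_refl z⟩
  · obtain ⟨m, hzm, hmem, hmax⟩ := hzorn
    refine ⟨OrderDual.ofDual m, hzm, hmem.1, ?_⟩
    intro t ht hle
    have hts : (OrderDual.toDual t) ∈ s := ⟨ht, le_trans hle hmem.2⟩
    exact le_antisymm hle (hmax hts hle)
  · intro c hcs' hchain y hy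
    haveI : Nonempty c := ⟨⟨y, hy⟩⟩
    have hne : ∀ i : c, (C ∩ dwC ({OrderDual.ofDual (i : Xᵒᵈ)} : Set X)).Nonempty :=
      fun i => ⟨OrderDual.ofDual (i : Xᵒᵈ), (hcs' i.2).1, mem_dwC_singleton.mpr le_rfl⟩
    have hcl : ∀ i : c, IsClosed (C ∩ dwC ({OrderDual.ofDual (i : Xᵒᵈ)} : Set X)) :=
      fun i => hC.inter (isClosed_dwC_singleton hP _)
    have hdir : Directed (· ⊇ ·)
        (fun i : c => C ∩ dwC ({OrderDual.ofDual (i : Xᵒᵈ)} : Set X)) := by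
      intro i j
      rcases eq_or_ne (i : Xᵒᵈ) (j : Xᵒᵈ) with h | h
      · obtain rfl : i = j := Subtype.ext h
        exact ⟨i, le_refl _, le_refl _⟩
      rcases hchain i.2 j.2 h with h' | h'
      · refine ⟨j, ?_, le_refl _⟩
        intro t ⟨htC, htd⟩
        exact ⟨htC, mem_dwC_singleton.mpr (le_trans (mem_dwC_singleton.mp htd) h')⟩
      · refine ⟨i, le_refl _, ?_⟩
        intro t ⟨htC, htd⟩
        exact ⟨htC, mem_dwC_singleton.mpr (le_trans (mem_dwC_singleton.mp htd) h')⟩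
    obtain ⟨ub, hub⟩ := IsCompact.nonempty_iInter_of_directed_nonempty_isCompact_isClosed
      _ hdir hne (fun i => (hcl i).isCompact) hcl
    simp only [Set.mem_iInter] at hub
    have hubC : ub ∈ C := (hub ⟨y, hy⟩).1
    have hubz : ub ≤ z :=
      le_trans (mem_dwC_singleton.mp (hub ⟨y, hy⟩).2) (hcs' hy).2
    refine ⟨OrderDual.toDual ub, ⟨hubC, hubz⟩, ?_⟩
    intro w hw
    exact (mem_dwC_singleton (x := OrderDual.ofDual w) (t := ub)).mp (hub ⟨w, hw⟩).2

/-- In an L-space, the interior of a closed downset is a clopen downset. -/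
lemma clopen_interior_of_closed_lower (hL : IsLSpace X) {D : Set X} (hD : IsClosed D)
    (hDl : IsLowerSet D) : IsClopen (interior D) ∧ IsLowerSet (interior D) := by
  have h := hL.2 Dᶜ hD.isOpen_compl hDl.compl
  have hint : interior D = (closure Dᶜ)ᶜ := by rw [closure_compl, compl_compl]
  refine ⟨⟨?_, isOpen_interior⟩, ?_⟩
  · rw [hint]; exact h.1.isClosed_compl
  · rw [hint]; exact h.2.compl

/-- In an algebraic L-space, a localic point of a clopen upset belongs to a clopen
Scott upset contained in it. -/
lemma localic_mem_core (hA : IsAlgebraicLSpace X) {p : X} (hp : p ∈ localicPts X)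
    {U : Set X} (hU : IsClopen U) (hUu : IsUpperSet U) (hpU : p ∈ U) :
    ∃ V ∈ ClopSUp X, V ⊆ U ∧ p ∈ V := by
  have hd : p ∈ closure (coreC U) := hA.2 U hU hUu hpU
  have hop : IsOpen (U ∩ dwC ({p} : Set X)) := hU.2.inter hp.2
  have hne : ((U ∩ dwC ({p} : Set X)) ∩ coreC U).Nonempty :=
    mem_closure_iff.mp hd _ hop ⟨hpU, mem_dwC_singleton.mpr le_rfl⟩
  obtain ⟨q, ⟨_, hqp⟩, hqcore⟩ := hne
  obtain ⟨V, ⟨hVmem, hVU⟩, hqV⟩ := hqcore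
  exact ⟨V, hVmem, hVU, hVmem.2.2.1 (mem_dwC_singleton.mp hqp) hqV⟩

/-- In a Priestley space, a closed upset can be separated from a point outside it by a
clopen upset. -/
lemma exists_clopen_upset_sep (hP : IsPriestley X) {F : Set X} (hFc : IsClosed F)
    (hFu : IsUpperSet F) {y : X} (hyF : y ∉ F) :
    ∃ U, IsClopen U ∧ IsUpperSet U ∧ F ⊆ U ∧ y ∉ U := by
  have hcs : CompactSpace X := hP.1
  have h : ∀ f ∈ F, ∃ U : Set X, IsClopen U ∧ IsUpperSet U ∧ f ∈ U ∧ y ∉ U :=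
    fun f hf => hP.2 f y (fun hle => hyF (hFu hle hf))
  choose! U hU1 hU2 hU3 hU4 using h
  have hcov : F ⊆ ⋃ f ∈ F, U f := fun f hf => Set.mem_biUnion hf (hU3 f hf)
  obtain ⟨b, hbF, hbfin, hbcov⟩ := hFc.isCompact.elim_finite_subcover_image
    (fun f hf => (hU1 f hf).2) hcov
  refine ⟨⋃ f ∈ b, U f, ?_, ?_, hbcov, ?_⟩
  · exact hbfin.isClopen_biUnion (fun f hf => hU1 f (hbF hf))
  · exact isUpperSet_iUnion₂ (fun f hf => hU2 f (hbF hf))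
  · intro hy
    obtain ⟨f, hf, hyf⟩ := Set.mem_iUnion₂.mp hy
    exact hU4 f (hbF hf) hyf

end Aux

/-- Let `X` be an arithmetic L-space, `y ∈ max Y` a maximal localic
point, and `F` a Scott upset. If `↑y ∩ F ≠ ∅`, then `y ∈ F`. -/
theorem statement10 (hX : IsArithmeticLSpace X) (y : X)
    (hy : y ∈ maxOf (localicPts X)) (F : Set X) (hF : IsScottUp F)
    (hne : (upC ({y} : Set X) ∩ F).Nonempty) : y ∈ F := by
  by_contra hyF
  obtain ⟨hAlg, hArith⟩ := hX
  have hL : IsLSpace X := hAlg.1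
  have hP : IsPriestley X := hL.1
  have hcs : CompactSpace X := hP.1
  obtain ⟨z, hzy, hzF⟩ := hne
  have hyz : y ≤ z := mem_upC_singleton.mp hzy
  obtain ⟨hFc, hFu, hFmin⟩ := hF
  -- separate `F` from `y` by a clopen upset `U`
  obtain ⟨U, hUc, hUu, hFU, hyU⟩ := exists_clopen_upset_sep hP hFc hFu hyF
  -- take `m` minimal in `F` below `z`; it is localic
  obtain ⟨m, hmz, hmF, hmmin⟩ := exists_min_le hP hFc hzF
  have hmY : m ∈ localicPts X := hFmin ⟨hmF, hmmin⟩
  -- clopen Scott upset `W` with `m ∈ W ⊆ U`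
  obtain ⟨W, hWmem, hWU, hmW⟩ := localic_mem_core hAlg hmY hUc hUu (hFU hmF)
  have hWupper : IsUpperSet W := hWmem.2.2.1
  have hzW : z ∈ W := hWupper hmz hmW
  -- take `w` minimal in `G = ↑y ∩ W`
  set G := upC ({y} : Set X) ∩ W with hGdef
  have hGclosed : IsClosed G := (isClosed_upC_singleton hP y).inter hWmem.2.1
  have hzG : z ∈ G := ⟨hzy, hzW⟩
  obtain ⟨w, hwz, hwG, hwmin⟩ := exists_min_le hP hGclosed hzG
  have hyw : y ≤ w := mem_upC_singleton.mp hwG.1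
  -- the clopen downset `I = int ↓w`
  obtain ⟨hIclopen, hIlower⟩ := clopen_interior_of_closed_lower hL
    (isClosed_dwC_singleton hP w) (isLowerSet_dwC _)
  set I := interior (dwC ({w} : Set X)) with hIdef
  -- the directed family of clopen Scott upsets containing `y`
  set 𝒱 : Set (Set X) := {V | V ∈ ClopSUp X ∧ y ∈ V} with h𝒱def
  haveI h𝒱ne : Nonempty 𝒱 := by
    obtain ⟨V, hV, _, hyV⟩ := localic_mem_core hAlg hy.1 isClopen_univ isUpperSet_univ
      (Set.mem_univ y)
    exact ⟨⟨V, hV, hyV⟩⟩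
  -- each `V ∩ W ∩ I` is nonempty: a minimal point of `V ∩ W` below `w` is localic
  have key : ∀ V ∈ 𝒱, (V ∩ W ∩ I).Nonempty := by
    intro V hV
    have hVWscott : IsScottUp (V ∩ W) := hArith V W hV.1 hWmem
    have hwVW : w ∈ V ∩ W := ⟨hV.1.2.2.1 hyw hV.2, hwG.2⟩
    obtain ⟨n, hnw, hnmem, hnmin⟩ := exists_min_le hP hVWscott.1 hwVW
    have hnY : n ∈ localicPts X := hVWscott.2.2 ⟨hnmem, hnmin⟩
    have hnI : n ∈ I := by
      refine mem_interior.mpr ⟨dwC ({n} : Set X), ?_, hnY.2, mem_dwC_singleton.mpr le_rfl⟩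
      intro t ht
      exact mem_dwC_singleton.mpr (le_trans (mem_dwC_singleton.mp ht) hnw)
    exact ⟨n, hnmem, hnI⟩
  have hVclosed : ∀ V : 𝒱, IsClosed ((V : Set X) ∩ W ∩ I) := fun V =>
    ((V.2.1.1.1).inter hWmem.1.1).inter hIclopen.1
  have hdir : Directed (· ⊇ ·) (fun V : 𝒱 => (V : Set X) ∩ W ∩ I) := by
    rintro V₁ V₂
    have hmemV : (V₁ : Set X) ∩ V₂ ∈ 𝒱 :=
      ⟨⟨V₁.2.1.1.inter V₂.2.1.1, hArith _ _ V₁.2.1 V₂.2.1⟩, V₁.2.2, V₂.2.2⟩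
    exact ⟨⟨_, hmemV⟩, fun x hx => ⟨⟨hx.1.1.1, hx.1.2⟩, hx.2⟩,
      fun x hx => ⟨⟨hx.1.1.2, hx.1.2⟩, hx.2⟩⟩
  obtain ⟨p, hp⟩ := IsCompact.nonempty_iInter_of_directed_nonempty_isCompact_isClosed
    _ hdir (fun V => key V V.2) (fun V => (hVclosed V).isCompact) hVclosed
  simp only [Set.mem_iInter] at hp
  -- `p` is above `y`
  have hyp : y ≤ p := by
    by_contra hnot
    obtain ⟨U', hU'c, hU'u, hyU', hpU'⟩ := hP.2 y p hnot
    obtain ⟨V, hVmem, hVU', hyV⟩ := localic_mem_core hAlg hy.1 hU'c hU'u hyU'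
    exact hpU' (hVU' (hp ⟨V, hVmem, hyV⟩).1.1)
  -- hence `p ∈ G` and `p ≤ w`, so `p = w` by minimality of `w`
  have hpW : p ∈ W := (hp h𝒱ne.some).1.2
  have hpI : p ∈ I := (hp h𝒱ne.some).2
  have hpw : p ≤ w := mem_dwC_singleton.mp (interior_subset hpI)
  have hpe : p = w := hwmin p ⟨mem_upC_singleton.mpr hyp, hpW⟩ hpw
  -- so `w ∈ I`, hence `↓w = I` is clopen and `w` is localic
  have hwI : w ∈ I := hpe ▸ hpI
  have hwloc : w ∈ localicPts X := by
    have hIeq : dwC ({w} : Set X) = I :=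
      Set.Subset.antisymm (fun t ht => hIlower (mem_dwC_singleton.mp ht) hwI) interior_subset
    show IsClopen (dwC ({w} : Set X))
    rw [hIeq]; exact hIclopen
  -- maximality of `y` gives `w = y`, so `y ∈ W ⊆ U`, contradicting `y ∉ U`
  have hwy : w = y := hy.2 w hwloc hyw
  exact hyU (hWU (hwy ▸ hwG.2))
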